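/- Let Z be an ordered *-space, H a VE-space over Z, X a nonempty set, and k : X × X → L*(H) a kernel. If (K,V) and (K',V') are two minimal VE-space linearisations of k, then there exists a unitary (VE-space isomorphism) U : K → K' such that U V(x) = V'(x) for all x ∈ X; that is, a minimal VE-space linearisation of k is unique up to unitary equivalence. -/

import Mathlib

noncomputable section

/-- An ordered `*`-space structure on a complex vector space `Z` with involution:
a strict cone of selfadjoint elements. -/
structure StarCone (Z : Type*) [AddCommGroup Z] [Module ℂ Z] [StarAddMonoid Z]
    [StarModule ℂ Z] where
  pos : Set Z
  zero_mem : (0 : Z) ∈ pos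
  add_mem : ∀ {x y : Z}, x ∈ pos → y ∈ pos → x + y ∈ pos
  smul_mem : ∀ {r : ℝ}, 0 ≤ r → ∀ {x : Z}, x ∈ pos → (r : ℂ) • x ∈ pos
  strict : ∀ {x : Z}, x ∈ pos → -x ∈ pos → x = 0
  star_mem : ∀ {x : Z}, x ∈ pos → star x = x

/-- The partial order induced by the cone: `a ≤ b` iff `b - a` is positive. -/
def StarCone.le {Z : Type*} [AddCommGroup Z] [Module ℂ Z] [StarAddMonoid Z] [StarModule ℂ Z]
    (O : StarCone Z) (a b : Z) : Prop :=
  b - a ∈ O.pos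

/-- A VE-space gramian on `E` over the ordered `*`-space `(Z, O)`: linear in the second
variable, Hermitian, positive and definite. -/
structure Gramian {Z : Type*} [AddCommGroup Z] [Module ℂ Z] [StarAddMonoid Z] [StarModule ℂ Z]
    (O : StarCone Z) (E : Type*) [AddCommGroup E] [Module ℂ E] where
  inner : E → E → Z
  add_right : ∀ x y z : E, inner x (y + z) = inner x y + inner x z
  smul_right : ∀ (c : ℂ) (x y : E), inner x (c • y) = c • inner x y
  conj_symm : ∀ x y : E, inner x y = star (inner y x)
  inner_self_mem : ∀ x : E, inner x x ∈ O.pos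
  definite : ∀ x : E, inner x x = 0 → x = 0

/-- A linear map `T` between VE-spaces over the same ordered `*`-space is adjointable if
it has an adjoint `S` with `[T e, f] = [e, S f]`. -/
def Adjointable {Z : Type*} [AddCommGroup Z] [Module ℂ Z] [StarAddMonoid Z] [StarModule ℂ Z]
    {O : StarCone Z} {E F : Type*} [AddCommGroup E] [Module ℂ E] [AddCommGroup F] [Module ℂ F]
    (gE : Gramian O E) (gF : Gramian O F) (T : E →ₗ[ℂ] F) : Prop :=
  ∃ S : F →ₗ[ℂ] E, ∀ (e : E) (f : F), gF.inner (T e) f = gE.inner e (S f)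

/-!
Pair up the two linearisations inside `K × K'`: let `S` be the span of the pairs
`(V x h, V' x h)`. Both gramians agree on these generators, since
`[V' x h, V' y h'] = [h, k x y h'] = [V x h, V y h']`, and by sesquilinearity they agree on all
of `S`, i.e. `[p.2, q.2] = [p.1, q.1]` for `p q ∈ S`. Definiteness then makes both projections
`S → K` and `S → K'` injective, and minimality makes them surjective, so `S` is the graph of a
linear bijection `K → K'`, which preserves the gramian and maps `V x h` to `V' x h`.
-/

theorem LinearMap.bijective_comp_subtype_of_map_eq_top {R M N : Type*} [Ring R]
    [AddCommGroup M] [Module R M] [AddCommGroup N] [Module R N]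
    {S : Submodule R M} {φ : M →ₗ[R] N} (hinj : ∀ p ∈ S, φ p = 0 → p = 0)
    (hsurj : S.map φ = ⊤) : Function.Bijective (φ.comp S.subtype) := by
  refine ⟨(injective_iff_map_eq_zero _).2 fun p hp => Subtype.ext (hinj p p.2 hp), fun n => ?_⟩
  obtain ⟨p, hp, rfl⟩ : n ∈ S.map φ := hsurj ▸ Submodule.mem_top
  exact ⟨⟨p, hp⟩, rfl⟩

namespace Gramian

variable {Z : Type*} [AddCommGroup Z] [Module ℂ Z] [StarAddMonoid Z] [StarModule ℂ Z]
  {O : StarCone Z} {E F : Type*} [AddCommGroup E] [Module ℂ E] [AddCommGroup F] [Module ℂ F]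

def innerRight (g : Gramian O E) (a : E) : E →ₗ[ℂ] Z where
  toFun := g.inner a
  map_add' := g.add_right a
  map_smul' c y := g.smul_right c a y

lemma inner_zero_right (g : Gramian O E) (x : E) : g.inner x 0 = 0 := by
  simpa using g.smul_right 0 x 0

lemma inner_zero_left (g : Gramian O E) (x : E) : g.inner 0 x = 0 := by
  rw [g.conj_symm, g.inner_zero_right, star_zero]

lemma inner_self_eq_zero (g : Gramian O E) {x : E} : g.inner x x = 0 ↔ x = 0 :=
  ⟨g.definite x, fun hx => hx ▸ g.inner_zero_left 0⟩

section SpanPairs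

variable (gE : Gramian O E) (gF : Gramian O F) {ι : Type*} {u : ι → E} {v : ι → F}

lemma inner_eq_of_mem_span_pairs {a : E} {b : F} (h : ∀ i, gF.inner b (v i) = gE.inner a (u i))
    {q : E × F} (hq : q ∈ Submodule.span ℂ (Set.range fun i => (u i, v i))) :
    gF.inner b q.2 = gE.inner a q.1 := by
  have heq : Set.EqOn ((gF.innerRight b).comp (LinearMap.snd ℂ E F))
      ((gE.innerRight a).comp (LinearMap.fst ℂ E F)) (Set.range fun i => (u i, v i)) := by
    rintro _ ⟨i, rfl⟩
    exact h i
  exact LinearMap.eqOn_span' heq hq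

lemma inner_snd_eq_inner_fst_of_mem_span_pairs
    (h : ∀ i j, gF.inner (v i) (v j) = gE.inner (u i) (u j)) {p q : E × F}
    (hp : p ∈ Submodule.span ℂ (Set.range fun i => (u i, v i)))
    (hq : q ∈ Submodule.span ℂ (Set.range fun i => (u i, v i))) :
    gF.inner p.2 q.2 = gE.inner p.1 q.1 := by
  have hp_gen (i : ι) : gF.inner p.2 (v i) = gE.inner p.1 (u i) := by
    rw [gF.conj_symm, gE.conj_symm, inner_eq_of_mem_span_pairs gE gF (h i) hp]
  exact inner_eq_of_mem_span_pairs gE gF hp_gen hq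

theorem exists_linearEquiv_of_inner_eq
    (hu : Submodule.span ℂ (Set.range u) = ⊤) (hv : Submodule.span ℂ (Set.range v) = ⊤)
    (h : ∀ i j, gF.inner (v i) (v j) = gE.inner (u i) (u j)) :
    ∃ U : E ≃ₗ[ℂ] F, (∀ f g, gF.inner (U f) (U g) = gE.inner f g) ∧ ∀ i, U (u i) = v i := by
  set S := Submodule.span ℂ (Set.range fun i => (u i, v i))
  have hS {p q} (hp : p ∈ S) (hq : q ∈ S) := inner_snd_eq_inner_fst_of_mem_span_pairs gE gF h hp hq
  have fst_eq_zero_iff {p} (hp : p ∈ S) : p.1 = 0 ↔ p.2 = 0 := by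
    rw [← gE.inner_self_eq_zero, ← gF.inner_self_eq_zero, hS hp hp]
  have fst_bij : Function.Bijective ((LinearMap.fst ℂ E F).comp S.subtype) := by
    refine LinearMap.bijective_comp_subtype_of_map_eq_top
      (fun p hp h1 => Prod.ext h1 ((fst_eq_zero_iff hp).1 h1)) ?_
    rw [Submodule.map_span, ← Set.range_comp]
    exact hu
  have snd_bij : Function.Bijective ((LinearMap.snd ℂ E F).comp S.subtype) := by
    refine LinearMap.bijective_comp_subtype_of_map_eq_top
      (fun p hp h2 => Prod.ext ((fst_eq_zero_iff hp).2 h2) h2) ?_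
    rw [Submodule.map_span, ← Set.range_comp]
    exact hv
  set e₁ := LinearEquiv.ofBijective _ fst_bij
  set e₂ := LinearEquiv.ofBijective _ snd_bij
  have he₁ (f : E) : (e₁.symm f : E × F).1 = f := e₁.apply_symm_apply f
  refine ⟨e₁.symm.trans e₂, fun f g => ?_, fun i => ?_⟩
  · conv_rhs => rw [← he₁ f, ← he₁ g]
    exact hS (e₁.symm f).2 (e₁.symm g).2
  · have : e₁.symm (u i) = ⟨(u i, v i), Submodule.subset_span ⟨i, rfl⟩⟩ := e₁.symm_apply_eq.2 rfl
    simp [this, e₂]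

end SpanPairs

end Gramian

theorem Set.setOf_exists_apply_eq_range_uncurry {α β γ : Type*} (f : α → β → γ) :
    {c | ∃ a b, f a b = c} = Set.range (Function.uncurry f) := by
  ext
  simp

theorem inner_linearisation_eq_kernel
    {Z : Type*} [AddCommGroup Z] [Module ℂ Z] [StarAddMonoid Z] [StarModule ℂ Z]
    {O : StarCone Z} {H K X : Type*} [AddCommGroup H] [Module ℂ H] [AddCommGroup K] [Module ℂ K]
    {gH : Gramian O H} {gK : Gramian O K} {k : X → X → (H →ₗ[ℂ] H)}
    {V : X → (H →ₗ[ℂ] K)} {Vadj : X → (K →ₗ[ℂ] H)}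
    (hV : ∀ (x : X) (e : H) (f : K), gK.inner (V x e) f = gH.inner e (Vadj x f))
    (hk : ∀ (x y : X) (h : H), k x y h = Vadj x (V y h)) (x y : X) (h h' : H) :
    gK.inner (V x h) (V y h') = gH.inner h (k x y h') := by
  rw [hV, hk]

theorem minimal_linearisation_unique_general
    {Z : Type*} [AddCommGroup Z] [Module ℂ Z] [StarAddMonoid Z] [StarModule ℂ Z]
    (O : StarCone Z)
    {H : Type*} [AddCommGroup H] [Module ℂ H] (gH : Gramian O H)
    {X : Type*}
    (k : X → X → (H →ₗ[ℂ] H))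
    {K : Type*} [AddCommGroup K] [Module ℂ K] (gK : Gramian O K)
    {K' : Type*} [AddCommGroup K'] [Module ℂ K'] (gK' : Gramian O K')
    (V : X → (H →ₗ[ℂ] K)) (Vadj : X → (K →ₗ[ℂ] H))
    (V' : X → (H →ₗ[ℂ] K')) (V'adj : X → (K' →ₗ[ℂ] H))
    -- `V x` is adjointable with adjoint `Vadj x`
    (hV : ∀ (x : X) (e : H) (f : K), gK.inner (V x e) f = gH.inner e (Vadj x f))
    (hV' : ∀ (x : X) (e : H) (f : K'), gK'.inner (V' x e) f = gH.inner e (V'adj x f))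
    -- both are linearisations of `k`:  `k(x,y) = V(x)* V(y)`
    (hk : ∀ (x y : X) (h : H), k x y h = Vadj x (V y h))
    (hk' : ∀ (x y : X) (h : H), k x y h = V'adj x (V' y h))
    -- minimality
    (hmin : Submodule.span ℂ {v : K | ∃ (x : X) (h : H), V x h = v} = ⊤)
    (hmin' : Submodule.span ℂ {v : K' | ∃ (x : X) (h : H), V' x h = v} = ⊤) :
    ∃ U : K →ₗ[ℂ] K', Function.Bijective U ∧
      (∀ f g : K, gK'.inner (U f) (U g) = gK.inner f g) ∧
      (∀ (x : X) (h : H), U (V x h) = V' x h) := by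
  obtain ⟨U, hU_inner, hU_V⟩ := Gramian.exists_linearEquiv_of_inner_eq gK gK'
    (u := Function.uncurry fun x h => V x h) (v := Function.uncurry fun x h => V' x h)
    (Set.setOf_exists_apply_eq_range_uncurry _ ▸ hmin)
    (Set.setOf_exists_apply_eq_range_uncurry _ ▸ hmin')
    fun _ _ => (inner_linearisation_eq_kernel hV' hk' ..).trans
      (inner_linearisation_eq_kernel hV hk ..).symm
  exact ⟨U, U.bijective, hU_inner, fun x h => hU_V (x, h)⟩

/-- uniqueness, up to unitary equivalence, of minimal VE-space
linearisations of a kernel `k` with values adjointable operators on a VE-space. -/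
theorem minimal_linearisation_unique
    {Z : Type*} [AddCommGroup Z] [Module ℂ Z] [StarAddMonoid Z] [StarModule ℂ Z]
    (O : StarCone Z)
    {H : Type*} [AddCommGroup H] [Module ℂ H] (gH : Gramian O H)
    {X : Type*} [Nonempty X]
    (k : X → X → (H →ₗ[ℂ] H))
    {K : Type*} [AddCommGroup K] [Module ℂ K] (gK : Gramian O K)
    {K' : Type*} [AddCommGroup K'] [Module ℂ K'] (gK' : Gramian O K')
    (V : X → (H →ₗ[ℂ] K)) (Vadj : X → (K →ₗ[ℂ] H))
    (V' : X → (H →ₗ[ℂ] K')) (V'adj : X → (K' →ₗ[ℂ] H))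
    -- `V x` is adjointable with adjoint `Vadj x`
    (hV : ∀ (x : X) (e : H) (f : K), gK.inner (V x e) f = gH.inner e (Vadj x f))
    (hV' : ∀ (x : X) (e : H) (f : K'), gK'.inner (V' x e) f = gH.inner e (V'adj x f))
    -- both are linearisations of `k`:  `k(x,y) = V(x)* V(y)`
    (hk : ∀ (x y : X) (h : H), k x y h = Vadj x (V y h))
    (hk' : ∀ (x y : X) (h : H), k x y h = V'adj x (V' y h))
    -- minimality
    (hmin : Submodule.span ℂ {v : K | ∃ (x : X) (h : H), V x h = v} = ⊤)
    (hmin' : Submodule.span ℂ {v : K' | ∃ (x : X) (h : H), V' x h = v} = ⊤) :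
    ∃ U : K →ₗ[ℂ] K', Function.Bijective U ∧
      (∀ f g : K, gK'.inner (U f) (U g) = gK.inner f g) ∧
      (∀ (x : X) (h : H), U (V x h) = V' x h) :=
  minimal_linearisation_unique_general O gH k gK gK' V Vadj V' V'adj hV hV' hk hk' hmin hmin'
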